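/- arXiv:1912.08646 — 4 statements merged into one kernel-verified Lean document; each statement's English description precedes it below -/
import Mathlib

section
/- Let R be a commutative ring, A a unital associative R-algebra, and W an invertible element of A ⊗[R] A satisfying the pentagon equation W₁₂ W₁₃ W₂₃ = W₂₃ W₁₂ in A ⊗ A ⊗ A. Then the R-algebra homomorphism Δ : A → A ⊗ A defined by Δ(x) = W⁻¹ (1 ⊗ x) W (the composition of the inclusion x ↦ 1 ⊗ x with conjugation by W) is coassociative: (Δ ⊗ id) ∘ Δ = (id ⊗ Δ) ∘ Δ as maps A → A ⊗ A ⊗ A, identifying (A ⊗ A) ⊗ A with A ⊗ (A ⊗ A) via the canonical associator algebra isomorphism. -/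
open scoped TensorProduct

/-- The leg embedding `W₁₂ : x ⊗ y ↦ x ⊗ y ⊗ 1`. -/
noncomputable def leg12 (R A : Type*) [CommRing R] [Ring A] [Algebra R A] :
    A ⊗[R] A →ₐ[R] A ⊗[R] (A ⊗[R] A) :=
  Algebra.TensorProduct.map (AlgHom.id R A)
    (Algebra.TensorProduct.includeLeft (S := R))

/-- The leg embedding `W₁₃ : x ⊗ y ↦ x ⊗ 1 ⊗ y`. -/
noncomputable def leg13 (R A : Type*) [CommRing R] [Ring A] [Algebra R A] :
    A ⊗[R] A →ₐ[R] A ⊗[R] (A ⊗[R] A) :=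
  Algebra.TensorProduct.map (AlgHom.id R A) Algebra.TensorProduct.includeRight

/-- The leg embedding `W₂₃ : x ⊗ y ↦ 1 ⊗ x ⊗ y`. -/
noncomputable def leg23 (R A : Type*) [CommRing R] [Ring A] [Algebra R A] :
    A ⊗[R] A →ₐ[R] A ⊗[R] (A ⊗[R] A) :=
  Algebra.TensorProduct.includeRight

/-!
Conjugation by `W` moves legs: after reassociating, `(Δ ⊗ id) t = W₁₂⁻¹ t₂₃ W₁₂` and
`(id ⊗ Δ) t = W₂₃⁻¹ t₁₃ W₂₃`. For `t = Δ x` both sides are therefore conjugates of `1 ⊗ 1 ⊗ x`,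
by `W₂₃ W₁₂` and by `W₁₂ W₁₃ W₂₃` respectively (inserting `W₁₂`, which commutes with
`1 ⊗ 1 ⊗ x`, into the second), and the pentagon equation says these two units agree.
-/

namespace Algebra.TensorProduct

variable {R A B C : Type*} [CommRing R] [Ring A] [Ring B] [Ring C]
  [Algebra R A] [Algebra R B] [Algebra R C]

theorem map_of_eq_conj_left {f g : A →ₐ[R] B} {u : Bˣ}
    (hf : ∀ x, f x = (↑u⁻¹ : B) * g x * u) (t : A ⊗[R] C) :
    map f (AlgHom.id R C) t
      = ((↑u⁻¹ : B) ⊗ₜ[R] (1 : C)) * map g (AlgHom.id R C) t * ((u : B) ⊗ₜ[R] (1 : C)) := by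
  induction t using TensorProduct.induction_on with
  | zero => simp
  | tmul a c => simp only [map_tmul, hf, tmul_mul_tmul, AlgHom.id_apply, one_mul, mul_one]
  | add s t hs ht => simp only [map_add, hs, ht, mul_add, add_mul]

theorem map_of_eq_conj_right {f g : A →ₐ[R] B} {u : Bˣ}
    (hf : ∀ x, f x = (↑u⁻¹ : B) * g x * u) (t : C ⊗[R] A) :
    map (AlgHom.id R C) f t
      = ((1 : C) ⊗ₜ[R] (↑u⁻¹ : B)) * map (AlgHom.id R C) g t * ((1 : C) ⊗ₜ[R] (u : B)) := by
  induction t using TensorProduct.induction_on with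
  | zero => simp
  | tmul c a => simp only [map_tmul, hf, tmul_mul_tmul, AlgHom.id_apply, one_mul, mul_one]
  | add s t hs ht => simp only [map_add, hs, ht, mul_add, add_mul]

end Algebra.TensorProduct

theorem Units.conj_conj_eq_of_mul_mul_eq {M : Type*} [Monoid M] {a b c : Mˣ}
    (h : a * b * c = c * a) {t : M} (ht : Commute (a : M) t) :
    ↑a⁻¹ * (↑c⁻¹ * t * c) * a = ↑c⁻¹ * (↑b⁻¹ * t * b) * c := by
  have hat : ↑a⁻¹ * t * a = t := by rw [mul_assoc, ← ht.eq, Units.inv_mul_cancel_left]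
  calc ↑a⁻¹ * (↑c⁻¹ * t * c) * a = ↑(c * a)⁻¹ * t * ↑(c * a) := by
        simp only [mul_inv_rev, Units.val_mul, mul_assoc]
    _ = ↑(a * b * c)⁻¹ * t * ↑(a * b * c) := by rw [h]
    _ = ↑c⁻¹ * (↑b⁻¹ * (↑a⁻¹ * t * a) * b) * c := by
        simp only [mul_inv_rev, Units.val_mul, mul_assoc]
    _ = ↑c⁻¹ * (↑b⁻¹ * t * b) * c := by rw [hat]

open Algebra.TensorProduct

section Legs

variable {R A : Type*} [CommRing R] [Ring A] [Algebra R A]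

theorem assoc_tmul_one_eq_leg12 (w : A ⊗[R] A) :
    Algebra.TensorProduct.assoc R R R A A A (w ⊗ₜ 1) = leg12 R A w := by
  induction w using TensorProduct.induction_on with
  | zero => simp
  | tmul a b => simp [leg12]
  | add v w hv hw => simp only [TensorProduct.add_tmul, map_add, hv, hw]

variable (R A) in
theorem assoc_comp_map_includeRight_id_eq_leg23 :
    (Algebra.TensorProduct.assoc R R R A A A).toAlgHom.comp
      (map includeRight (AlgHom.id R A)) = leg23 R A := by
  ext <;> simp [leg23]

theorem commute_leg12_one_tmul_one_tmul (w : A ⊗[R] A) (x : A) :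
    Commute (leg12 R A w) (1 ⊗ₜ (1 ⊗ₜ x)) := by
  induction w using TensorProduct.induction_on with
  | zero => simp
  | tmul a b => simp [leg12, Commute, SemiconjBy, tmul_mul_tmul]
  | add v w hv hw => simpa only [map_add] using hv.add_left hw

variable {W : (A ⊗[R] A)ˣ} {Δ : A →ₐ[R] A ⊗[R] A}

theorem assoc_map_comul_id_eq_conj_leg12
    (hΔ : ∀ x, Δ x = (↑W⁻¹ : A ⊗[R] A) * (1 ⊗ₜ[R] x) * (W : A ⊗[R] A)) (t : A ⊗[R] A) :
    Algebra.TensorProduct.assoc R R R A A A (map Δ (AlgHom.id R A) t)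
      = leg12 R A ↑W⁻¹ * leg23 R A t * leg12 R A (W : A ⊗[R] A) := by
  rw [map_of_eq_conj_left (g := includeRight) (u := W) hΔ, map_mul, map_mul,
    assoc_tmul_one_eq_leg12, assoc_tmul_one_eq_leg12,
    ← assoc_comp_map_includeRight_id_eq_leg23]
  rfl

theorem map_id_comul_eq_conj_leg23
    (hΔ : ∀ x, Δ x = (↑W⁻¹ : A ⊗[R] A) * (1 ⊗ₜ[R] x) * (W : A ⊗[R] A)) (t : A ⊗[R] A) :
    map (AlgHom.id R A) Δ t = leg23 R A ↑W⁻¹ * leg13 R A t * leg23 R A (W : A ⊗[R] A) := by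
  rw [map_of_eq_conj_right (g := includeRight) (u := W) hΔ]
  rfl

end Legs

/-- If `W` is an invertible element of `A ⊗ A` satisfying the pentagon equation, then
`Δ(x) = W⁻¹ (1 ⊗ x) W` defines a coassociative comultiplication on `A`. -/
theorem pentagon_implies_coassociative
    (R A : Type*) [CommRing R] [Ring A] [Algebra R A]
    (W : (A ⊗[R] A)ˣ)
    (pentagon : leg12 R A (W : A ⊗[R] A) * leg13 R A (W : A ⊗[R] A) *
        leg23 R A (W : A ⊗[R] A)
      = leg23 R A (W : A ⊗[R] A) * leg12 R A (W : A ⊗[R] A))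
    (Δ : A →ₐ[R] A ⊗[R] A)
    (hΔ : ∀ x : A, Δ x = (↑W⁻¹ : A ⊗[R] A) * (1 ⊗ₜ[R] x) * (W : A ⊗[R] A)) :
    ∀ x : A,
      (Algebra.TensorProduct.assoc R R R A A A)
          ((Algebra.TensorProduct.map Δ (AlgHom.id R A)) (Δ x))
        = (Algebra.TensorProduct.map (AlgHom.id R A) Δ) (Δ x) := by
  intro x
  let leg (f : A ⊗[R] A →ₐ[R] A ⊗[R] (A ⊗[R] A)) := Units.map f.toMonoidHom W
  have hP : leg (leg12 R A) * leg (leg13 R A) * leg (leg23 R A)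
      = leg (leg23 R A) * leg (leg12 R A) := Units.ext pentagon
  rw [assoc_map_comul_id_eq_conj_leg12 hΔ, map_id_comul_eq_conj_leg23 hΔ, hΔ x,
    map_mul, map_mul, map_mul, map_mul]
  exact Units.conj_conj_eq_of_mul_mul_eq hP (commute_leg12_one_tmul_one_tmul (W : A ⊗[R] A) x)
end

section
/- Let R be a commutative ring, A a unital associative R-algebra, σ : A ⊗[R] A → A ⊗[R] A the flip algebra automorphism x ⊗ y ↦ y ⊗ x, and W an invertible element of A ⊗ A satisfying the pentagon equation W₁₂ W₁₃ W₂₃ = W₂₃ W₁₂. Then the element Ŵ := σ(W)⁻¹ = σ(W⁻¹) also satisfies the pentagon equation Ŵ₁₂ Ŵ₁₃ Ŵ₂₃ = Ŵ₂₃ Ŵ₁₂. -/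
open scoped TensorProduct

theorem reversed_pentagon_map_inv_of_pentagon_map {M N F : Type*} [Monoid M]
    [Monoid N] [FunLike F M N] [MonoidHomClass F M N] (f g h : F) (w : Mˣ)
    (hw : f w * g w * h w = h w * f w) :
    h ↑w⁻¹ * g ↑w⁻¹ * f ↑w⁻¹ = f ↑w⁻¹ * h ↑w⁻¹ := by
  let u : F → Nˣ := fun k => Units.map (k : M →* N) w
  have hu : u f * u g * u h = u h * u f := Units.ext (by simpa [u] using hw)
  simpa [u, mul_inv_rev, mul_assoc] using congrArg (fun v : Nˣ => ((v⁻¹ : Nˣ) : N)) hu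

section Legs

variable (R A : Type*) [CommRing R] [Ring A] [Algebra R A]

noncomputable def reverseLegs : A ⊗[R] (A ⊗[R] A) ≃ₐ[R] A ⊗[R] (A ⊗[R] A) :=
  (Algebra.TensorProduct.comm R A (A ⊗[R] A)).trans
    ((Algebra.TensorProduct.congr (Algebra.TensorProduct.comm R A A) AlgEquiv.refl).trans
      (Algebra.TensorProduct.assoc R R R A A A))

@[simp]
theorem reverseLegs_tmul (a b c : A) :
    reverseLegs R A (a ⊗ₜ[R] (b ⊗ₜ[R] c)) = c ⊗ₜ[R] (b ⊗ₜ[R] a) := by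
  simp [reverseLegs]

theorem reverseLegs_leg12 (x : A ⊗[R] A) :
    reverseLegs R A (leg12 R A x) = leg23 R A (Algebra.TensorProduct.comm R A A x) := by
  induction x using TensorProduct.induction_on with
  | zero => simp
  | tmul a b => simp [leg12, leg23]
  | add x y hx hy => simp [hx, hy]

theorem reverseLegs_leg13 (x : A ⊗[R] A) :
    reverseLegs R A (leg13 R A x) = leg13 R A (Algebra.TensorProduct.comm R A A x) := by
  induction x using TensorProduct.induction_on with
  | zero => simp
  | tmul a b => simp [leg13]
  | add x y hx hy => simp [hx, hy]

theorem reverseLegs_leg23 (x : A ⊗[R] A) :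
    reverseLegs R A (leg23 R A x) = leg12 R A (Algebra.TensorProduct.comm R A A x) := by
  induction x using TensorProduct.induction_on with
  | zero => simp
  | tmul a b => simp [leg12, leg23]
  | add x y hx hy => simp [hx, hy]

theorem pentagon_comm_of_reversed_pentagon (X : A ⊗[R] A)
    (h : leg23 R A X * leg13 R A X * leg12 R A X = leg12 R A X * leg23 R A X) :
    let Y := Algebra.TensorProduct.comm R A A X
    leg12 R A Y * leg13 R A Y * leg23 R A Y = leg23 R A Y * leg12 R A Y := by
  simpa only [map_mul, reverseLegs_leg12, reverseLegs_leg13, reverseLegs_leg23] using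
    congrArg (reverseLegs R A) h

end Legs

/-- If `W` is an invertible element of `A ⊗ A` satisfying the pentagon equation and `σ` is
the flip automorphism of `A ⊗ A`, then `Wdual = σ(W)⁻¹ = σ(W⁻¹)` also satisfies the pentagon
equation. -/
theorem dual_multiplicative_unitary_pentagon
    (R A : Type*) [CommRing R] [Ring A] [Algebra R A]
    (W : (A ⊗[R] A)ˣ)
    (pentagon : leg12 R A (W : A ⊗[R] A) * leg13 R A (W : A ⊗[R] A) *
        leg23 R A (W : A ⊗[R] A)
      = leg23 R A (W : A ⊗[R] A) * leg12 R A (W : A ⊗[R] A))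
    (Wdual : A ⊗[R] A)
    (hWdual : Wdual = Algebra.TensorProduct.comm R A A (↑W⁻¹ : A ⊗[R] A)) :
    leg12 R A Wdual * leg13 R A Wdual * leg23 R A Wdual = leg23 R A Wdual * leg12 R A Wdual := by
  subst hWdual
  exact pentagon_comm_of_reversed_pentagon R A _
    (reversed_pentagon_map_inv_of_pentagon_map _ _ _ W pentagon)
end

section
/- Let N be a natural number, d : Fin N → ℤ, R = ℤ[X₀, …, X_{N−1}] (MvPolynomial (Fin N) ℤ), and M = Fin N → R the free R-module of rank N with standard basis (eᵢ). Let λ : M → R be the R-linear functional with λ(eᵢ) = Xᵢ − dᵢ, and let δ be the left contraction (interior product) by λ on the exterior algebra ⋀ M (the Clifford algebra of the zero quadratic form on M), an R-linear map of square zero. Then the kernel of δ equals the sum of the range of δ and the R-submodule of ⋀ M spanned by the unit element 1; equivalently, every ω ∈ ⋀ M with δ(ω) = 0 can be written as ω = δ(η) + r·1 for some η ∈ ⋀ M and r ∈ R. -/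
/-!
Write `Yᵢ = Xᵢ - dᵢ`. The elements `Y^α • e_S` form an `A`-basis of `⋀ (σ → A[X])`, and
`δ (Y^α • e_S) = ∑_{j ∈ S} ± Y^(α + eⱼ) • e_(S \ {j})`; every term on the right has the same
"support" `supp α ∪ S`. Let `i` be the least element of this support. The `A`-linear map `h`
sending `Y^α • e_S` to `Y^(α - eᵢ) • e_(S ∪ {i})` if `i ∉ S`, and to `0` otherwise, satisfies
`δ h + h δ = id - π` on every basis vector, where `π` takes the coefficient of `1 = Y^0 • e_∅`.
So a cycle `ω` equals `δ (h ω) + π ω`.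
-/

open Finset MvPolynomial

namespace Finset

variable {I : Type*} [LinearOrder I]

theorem card_filter_lt_eq_zero {i : I} {s : Finset I} (hi : ∀ x ∈ s, i ≤ x) :
    #{x ∈ s | x < i} = 0 :=
  card_eq_zero.2 (filter_eq_empty_iff.2 fun x hx => not_lt_of_ge (hi x hx))

theorem card_filter_lt_insert {i j : I} {s : Finset I} (hi : i ∉ s) (hij : i < j) :
    #{x ∈ insert i s | x < j} = #{x ∈ s | x < j} + 1 := by
  rw [filter_insert, if_pos hij, card_insert_of_notMem fun h => hi (mem_filter.1 h).1]

end Finset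

theorem Finsupp.support_add_single_union_erase {σ : Type*} [DecidableEq σ] (α : σ →₀ ℕ)
    {j : σ} {s : Finset σ} (hj : j ∈ s) :
    (α + Finsupp.single j 1).support ∪ s.erase j = α.support ∪ s := by
  ext x
  by_cases hx : x = j
  · subst hx; simp [hj]
  · simp [hx]

namespace ExteriorAlgebra

variable {R M I : Type*} [CommRing R] [AddCommGroup M] [Module R M] [LinearOrder I]
  (b : Module.Basis I R M)

theorem basis_eq_prod_sort (s : Finset I) :
    b.ExteriorAlgebra s = ((s.sort (· ≤ ·)).map fun i => ι R (b i)).prod := by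
  rw [basis_apply_ofCard b rfl, ιMulti_family, ιMulti_apply, List.ofFn_eq_map,
    ← listMap_orderEmbOfFin_finRange s rfl, List.map_map]
  rfl

theorem basis_empty : b.ExteriorAlgebra ∅ = 1 := by
  simp [basis_eq_prod_sort]

theorem basis_insert_of_lt {i : I} {s : Finset I} (hi : ∀ j ∈ s, i < j) :
    b.ExteriorAlgebra (insert i s) = ι R (b i) * b.ExteriorAlgebra s := by
  rw [basis_eq_prod_sort, basis_eq_prod_sort,
    sort_insert _ (fun j hj => (hi j hj).le) (fun h => lt_irrefl i (hi i h)),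
    List.map_cons, List.prod_cons]

theorem contractLeft_basis (f : Module.Dual R M) (s : Finset I) :
    CliffordAlgebra.contractLeft (Q := 0) f (b.ExteriorAlgebra s) =
      ∑ j ∈ s, (-1 : ℤ) ^ #{x ∈ s | x < j} • f (b j) • b.ExteriorAlgebra (s.erase j) := by
  induction s using Finset.induction_on_min with
  | empty => simp [basis_empty]
  | insert i s hi ih =>
    have his : i ∉ s := fun h => lt_irrefl i (hi i h)
    have herase : ∀ j ∈ s, ι R (b i) * b.ExteriorAlgebra (s.erase j) =
        b.ExteriorAlgebra ((insert i s).erase j) := fun j hj => by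
      rw [erase_insert_of_ne (hi j hj).ne,
        basis_insert_of_lt b fun x hx => hi x (mem_of_mem_erase hx)]
    rw [basis_insert_of_lt b hi, CliffordAlgebra.contractLeft_ι_mul, ih, sum_insert his,
      erase_insert his, card_filter_lt_eq_zero (by simpa using fun x hx => (hi x hx).le),
      pow_zero, one_smul, sub_eq_add_neg, mul_sum, ← sum_neg_distrib]
    congr 1
    refine sum_congr rfl fun j hj => ?_
    rw [card_filter_lt_insert his (hi j hj), pow_succ, mul_neg_one, neg_smul, mul_smul_comm,
      mul_smul_comm, herase j hj]

end ExteriorAlgebra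

namespace MvPolynomial

variable {σ A : Type*} [CommRing A]

noncomputable def translate (d : σ → A) : MvPolynomial σ A ≃ₐ[A] MvPolynomial σ A :=
  AlgEquiv.ofAlgHom (aeval fun i => X i - C (d i)) (aeval fun i => X i + C (d i))
    (algHom_ext fun i => by simp) (algHom_ext fun i => by simp)

noncomputable def shiftedMonomialBasis (d : σ → A) :
    Module.Basis (σ →₀ ℕ) A (MvPolynomial σ A) :=
  (basisMonomials σ A).map (translate d).toLinearEquiv

theorem shiftedMonomialBasis_apply (d : σ → A) (α : σ →₀ ℕ) :
    shiftedMonomialBasis d α = translate d (monomial α 1) := by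
  simp [shiftedMonomialBasis]

theorem shiftedMonomialBasis_zero (d : σ → A) : shiftedMonomialBasis d 0 = 1 := by
  rw [shiftedMonomialBasis_apply, monomial_zero', C_1, map_one]

theorem shiftedMonomialBasis_add_single (d : σ → A) (α : σ →₀ ℕ) (j : σ) :
    shiftedMonomialBasis d (α + Finsupp.single j 1) =
      (X j - C (d j)) * shiftedMonomialBasis d α := by
  rw [shiftedMonomialBasis_apply, shiftedMonomialBasis_apply, ← mul_one (1 : A), ← monomial_mul,
    map_mul, mul_comm, ← X]
  simp [translate]

end MvPolynomial

section Koszul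

variable {σ A : Type*} [LinearOrder σ] [Finite σ] [CommRing A] (d : σ → A)

noncomputable def koszulBasis :
    Module.Basis ((σ →₀ ℕ) × Finset σ) A
      (ExteriorAlgebra (MvPolynomial σ A) (σ → MvPolynomial σ A)) :=
  (shiftedMonomialBasis d).smulTower (Pi.basisFun (MvPolynomial σ A) σ).ExteriorAlgebra

theorem koszulBasis_apply (α : σ →₀ ℕ) (s : Finset σ) :
    koszulBasis d (α, s) =
      shiftedMonomialBasis d α • (Pi.basisFun (MvPolynomial σ A) σ).ExteriorAlgebra s :=
  Module.Basis.smulTower_apply _ _ _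

theorem koszulBasis_zero_empty : koszulBasis d (0, ∅) = 1 := by
  rw [koszulBasis_apply, shiftedMonomialBasis_zero, ExteriorAlgebra.basis_empty, one_smul]

theorem contractLeft_koszulBasis {f : Module.Dual (MvPolynomial σ A) (σ → MvPolynomial σ A)}
    (hf : ∀ i, f (Pi.single i 1) = X i - C (d i)) (α : σ →₀ ℕ) (s : Finset σ) :
    CliffordAlgebra.contractLeft (Q := 0) f (koszulBasis d (α, s)) =
      ∑ j ∈ s, (-1 : ℤ) ^ #{x ∈ s | x < j} •
        koszulBasis d (α + Finsupp.single j 1, s.erase j) := by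
  rw [koszulBasis_apply, map_smul, ExteriorAlgebra.contractLeft_basis, smul_sum]
  refine sum_congr rfl fun j _ => ?_
  rw [koszulBasis_apply, Pi.basisFun_apply, hf, smul_comm, smul_smul,
    shiftedMonomialBasis_add_single, mul_comm]

noncomputable def koszulHomotopy :
    ExteriorAlgebra (MvPolynomial σ A) (σ → MvPolynomial σ A) →ₗ[A]
      ExteriorAlgebra (MvPolynomial σ A) (σ → MvPolynomial σ A) :=
  (koszulBasis d).constr A fun p =>
    if h : (p.1.support ∪ p.2).Nonempty then
      if (p.1.support ∪ p.2).min' h ∈ p.2 then 0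
      else koszulBasis d (p.1 - Finsupp.single ((p.1.support ∪ p.2).min' h) 1,
        insert ((p.1.support ∪ p.2).min' h) p.2)
    else 0

theorem koszulHomotopy_koszulBasis {α : σ →₀ ℕ} {s : Finset σ} {i : σ}
    (hi : IsLeast (α.support ∪ s : Finset σ) i) :
    koszulHomotopy d (koszulBasis d (α, s)) =
      if i ∈ s then 0 else koszulBasis d (α - Finsupp.single i 1, insert i s) := by
  have hne : (α.support ∪ s).Nonempty := ⟨i, hi.1⟩
  rw [koszulHomotopy, Module.Basis.constr_basis, dif_pos hne,
    (isLeast_min' _ hne).unique hi]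

theorem koszulHomotopy_koszulBasis_zero_empty :
    koszulHomotopy d (koszulBasis d (0, ∅)) = 0 := by
  rw [koszulHomotopy, Module.Basis.constr_basis, dif_neg (by simp)]

variable {d} {f : Module.Dual (MvPolynomial σ A) (σ → MvPolynomial σ A)}
  (hf : ∀ i, f (Pi.single i 1) = X i - C (d i))
include hf

theorem homotopy_identity_koszulBasis_of_least_mem {α : σ →₀ ℕ} {s : Finset σ} {i : σ}
    (hi : IsLeast (α.support ∪ s : Finset σ) i) (his : i ∈ s) :
    CliffordAlgebra.contractLeft (Q := 0) f (koszulHomotopy d (koszulBasis d (α, s))) +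
        koszulHomotopy d (CliffordAlgebra.contractLeft (Q := 0) f (koszulBasis d (α, s))) +
        (koszulBasis d).coord (0, ∅) (koszulBasis d (α, s)) • 1 =
      koszulBasis d (α, s) := by
  have hterm : ∀ j ∈ s, koszulHomotopy d (koszulBasis d (α + Finsupp.single j 1, s.erase j)) =
      if j = i then koszulBasis d (α, s) else 0 := by
    intro j hj
    rw [koszulHomotopy_koszulBasis d (α.support_add_single_union_erase hj ▸ hi)]
    rcases eq_or_ne j i with rfl | hji
    · rw [if_neg (notMem_erase j s), if_pos rfl, add_tsub_cancel_right, insert_erase hj]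
    · rw [if_pos (mem_erase.2 ⟨hji.symm, his⟩), if_neg hji]
  have hcoord : (koszulBasis d).coord (0, ∅) (koszulBasis d (α, s)) = 0 := by
    rw [Module.Basis.coord_apply, Module.Basis.repr_self,
      Finsupp.single_eq_of_ne fun h => ne_empty_of_mem his (Prod.mk.inj h).2.symm]
  rw [koszulHomotopy_koszulBasis d hi, if_pos his, map_zero, zero_add, hcoord, zero_smul,
    add_zero, contractLeft_koszulBasis d hf, map_sum]
  rw [sum_congr rfl fun j hj => by rw [map_zsmul, hterm j hj],
    sum_eq_single_of_mem i his fun j _ hji => by rw [if_neg hji, smul_zero], if_pos rfl,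
    card_filter_lt_eq_zero fun x hx => hi.2 (mem_union_right _ hx), pow_zero, one_smul]

theorem homotopy_identity_koszulBasis_of_least_notMem {α : σ →₀ ℕ} {s : Finset σ} {i : σ}
    (hi : IsLeast (α.support ∪ s : Finset σ) i) (his : i ∉ s) :
    CliffordAlgebra.contractLeft (Q := 0) f (koszulHomotopy d (koszulBasis d (α, s))) +
        koszulHomotopy d (CliffordAlgebra.contractLeft (Q := 0) f (koszulBasis d (α, s))) +
        (koszulBasis d).coord (0, ∅) (koszulBasis d (α, s)) • 1 =
      koszulBasis d (α, s) := by
  have hαi : α i ≠ 0 := Finsupp.mem_support_iff.1 ((mem_union.1 hi.1).resolve_right his)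
  have hlt : ∀ j ∈ s, i < j := fun j hj =>
    lt_of_le_of_ne (hi.2 (mem_union_right _ hj)) fun h => his (h ▸ hj)
  have hterm : ∀ j ∈ s, koszulHomotopy d (koszulBasis d (α + Finsupp.single j 1, s.erase j)) =
      koszulBasis d (α - Finsupp.single i 1 + Finsupp.single j 1, insert i (s.erase j)) := by
    intro j hj
    rw [koszulHomotopy_koszulBasis d (α.support_add_single_union_erase hj ▸ hi),
      if_neg fun h => his (mem_of_mem_erase h), Finsupp.sub_single_one_add hαi]
  have hcoord : (koszulBasis d).coord (0, ∅) (koszulBasis d (α, s)) = 0 := by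
    rw [Module.Basis.coord_apply, Module.Basis.repr_self, Finsupp.single_eq_of_ne fun h =>
      hαi (by rw [← (Prod.mk.inj h).1, Finsupp.coe_zero, Pi.zero_apply])]
  rw [koszulHomotopy_koszulBasis d hi, if_neg his, contractLeft_koszulBasis d hf,
    contractLeft_koszulBasis d hf, map_sum, sum_insert his, erase_insert his,
    card_filter_lt_eq_zero (by simpa using fun x hx => (hlt x hx).le), pow_zero, one_smul,
    Finsupp.sub_single_one_add hαi, add_tsub_cancel_right, hcoord, zero_smul, add_zero,
    add_assoc, ← sum_add_distrib, add_eq_left]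
  refine sum_eq_zero fun j hj => ?_
  rw [card_filter_lt_insert his (hlt j hj), pow_succ, mul_neg_one, neg_smul, map_zsmul,
    hterm j hj, erase_insert_of_ne (hlt j hj).ne, neg_add_cancel]

theorem homotopy_identity_koszulBasis_zero_empty :
    CliffordAlgebra.contractLeft (Q := 0) f (koszulHomotopy d (koszulBasis d (0, ∅))) +
        koszulHomotopy d (CliffordAlgebra.contractLeft (Q := 0) f (koszulBasis d (0, ∅))) +
        (koszulBasis d).coord (0, ∅) (koszulBasis d (0, ∅)) • 1 =
      koszulBasis d (0, ∅) := by
  rw [koszulHomotopy_koszulBasis_zero_empty, contractLeft_koszulBasis d hf, sum_empty, map_zero,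
    map_zero, Module.Basis.coord_apply, Module.Basis.repr_self, Finsupp.single_eq_same, one_smul,
    zero_add, zero_add, koszulBasis_zero_empty]

theorem contractLeft_koszulHomotopy_add_koszulHomotopy_contractLeft
    (ω : ExteriorAlgebra (MvPolynomial σ A) (σ → MvPolynomial σ A)) :
    CliffordAlgebra.contractLeft (Q := 0) f (koszulHomotopy d ω) +
        koszulHomotopy d (CliffordAlgebra.contractLeft (Q := 0) f ω) +
        (koszulBasis d).coord (0, ∅) ω • 1 = ω := by
  have hmaps : (CliffordAlgebra.contractLeft (Q := 0) f).restrictScalars A ∘ₗ koszulHomotopy d +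
      koszulHomotopy d ∘ₗ (CliffordAlgebra.contractLeft (Q := 0) f).restrictScalars A +
      LinearMap.toSpanSingleton A _ 1 ∘ₗ (koszulBasis d).coord (0, ∅) = LinearMap.id := by
    refine (koszulBasis d).ext fun ⟨α, s⟩ => ?_
    by_cases hU : (α.support ∪ s).Nonempty
    · by_cases hmin : (α.support ∪ s).min' hU ∈ s
      · exact homotopy_identity_koszulBasis_of_least_mem hf (isLeast_min' _ hU) hmin
      · exact homotopy_identity_koszulBasis_of_least_notMem hf (isLeast_min' _ hU) hmin
    · obtain ⟨hα, rfl⟩ := union_eq_empty.1 (not_nonempty_iff_eq_empty.1 hU)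
      rw [Finsupp.support_eq_empty.1 hα]
      exact homotopy_identity_koszulBasis_zero_empty hf
  exact LinearMap.congr_fun hmaps ω

end Koszul

/-- Exactness of the Koszul complex of the regular sequence `Xᵢ − dᵢ` in
`R = ℤ[X₀, …, X_{N−1}]`: for the left contraction `δ` by the linear functional
`λ(eᵢ) = Xᵢ − dᵢ` on the exterior algebra of the free module `Fin N → R`,
the kernel of `δ` is the sum of the range of `δ` and the span of `1`. -/
theorem koszul_contraction_exact (N : ℕ) (d : Fin N → ℤ)
    (lam : Module.Dual (MvPolynomial (Fin N) ℤ) (Fin N → MvPolynomial (Fin N) ℤ))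
    (hlam : ∀ i : Fin N, lam (Pi.single i 1) = (X i : MvPolynomial (Fin N) ℤ) - C (d i))
    (δ : ExteriorAlgebra (MvPolynomial (Fin N) ℤ) (Fin N → MvPolynomial (Fin N) ℤ)
      →ₗ[MvPolynomial (Fin N) ℤ]
        ExteriorAlgebra (MvPolynomial (Fin N) ℤ) (Fin N → MvPolynomial (Fin N) ℤ))
    (hδ : δ = CliffordAlgebra.contractLeft (Q := (0 : QuadraticForm (MvPolynomial (Fin N) ℤ)
        (Fin N → MvPolynomial (Fin N) ℤ))) lam) :
    LinearMap.ker δ = LinearMap.range δ ⊔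
      Submodule.span (MvPolynomial (Fin N) ℤ)
        {(1 : ExteriorAlgebra (MvPolynomial (Fin N) ℤ) (Fin N → MvPolynomial (Fin N) ℤ))} := by
  subst hδ
  refine le_antisymm (fun ω hω => ?_) (sup_le ?_ ?_)
  · rw [← contractLeft_koszulHomotopy_add_koszulHomotopy_contractLeft hlam ω,
      LinearMap.mem_ker.1 hω, map_zero, add_zero]
    exact Submodule.add_mem_sup (LinearMap.mem_range_self _ _)
      (Submodule.smul_of_tower_mem _ _ (Submodule.mem_span_singleton_self 1))
  · rintro _ ⟨η, rfl⟩
    exact LinearMap.mem_ker.2 (CliffordAlgebra.contractLeft_contractLeft _ _)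
  · rw [Submodule.span_le, Set.singleton_subset_iff]
    exact LinearMap.mem_ker.2 (CliffordAlgebra.contractLeft_one _ _)
end

section
/- Let N be a natural number and A = ℤ[ℤ^N] the integral group ring of the free abelian group ℤ^N (that is, AddMonoidAlgebra ℤ (Fin N → ℤ)). Let x₀, …, x_{N−1} ∈ A be the group-like elements corresponding to the standard basis vectors of ℤ^N, and let ε : A → ℤ be the augmentation ring homomorphism sending every group-like element to 1 (i.e. summing coefficients). Then (x₀ − 1, …, x_{N−1} − 1) is a regular sequence in A, and the kernel of ε is exactly the ideal generated by the elements xᵢ − 1. -/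
/-!
Write `I_s` for the ideal generated by the `xᵢ - 1` with `i ∈ s`. Killing the coordinates in `s` is
an idempotent endomorphism of `ℤ^N`; the ring endomorphism `φ_s` of `ℤ[ℤ^N]` it induces has kernel
`I_s`, because `g - φ_s g` lies in the subgroup generated by the basis vectors indexed by `s`, so
that `a - φ_s a ∈ I_s`. Hence `ℤ[ℤ^N] ⧸ I_s` embeds into the domain `ℤ[ℤ^N]`, and for `i ∉ s` the
element `xᵢ - 1` is nonzero and fixed by `φ_s`, hence a nonzerodivisor modulo `I_s`. When `s` is
everything, `φ_s` is `ε` followed by the inclusion of constants, so `ker ε = I_s`.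
-/

open AddMonoidAlgebra

@[simp]
theorem Set.indicatorHom_apply {α M : Type*} [AddZeroClass M] (s : Set α) (f : α → M) :
    Set.indicatorHom M s f = s.indicator f :=
  rfl

theorem List.mem_take_ofFn {α : Type*} {n k : ℕ} {f : Fin n → α} {a : α} :
    a ∈ (List.ofFn f).take k ↔ ∃ i : Fin n, (i : ℕ) < k ∧ f i = a := by
  simp only [List.mem_iff_getElem, List.getElem_take, List.getElem_ofFn, List.length_take,
    List.length_ofFn, lt_min_iff]
  constructor
  · rintro ⟨j, ⟨hjk, hjn⟩, rfl⟩
    exact ⟨⟨j, hjn⟩, hjk, rfl⟩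
  · rintro ⟨i, hik, rfl⟩
    exact ⟨i, ⟨hik, i.isLt⟩, rfl⟩

theorem Ideal.ofList_take_ofFn {R : Type*} [Semiring R] {n : ℕ} (f : Fin n → R) (k : ℕ) :
    Ideal.ofList ((List.ofFn f).take k) = Ideal.span (f '' {i | (i : ℕ) < k}) :=
  congrArg Ideal.span <| Set.ext fun _ => List.mem_take_ofFn.trans <| by simp

theorem Ideal.ofList_ofFn {R : Type*} [Semiring R] {n : ℕ} (f : Fin n → R) :
    Ideal.ofList (List.ofFn f) = Ideal.span (Set.range f) :=
  congrArg Ideal.span <| Set.ext fun _ => List.mem_ofFn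

namespace AddMonoidAlgebra

section Group

variable {R G : Type*} [Ring R] [AddGroup G]

theorem single_sub_one_mem_of_mem_closure {I : Ideal R[G]} {S : Set G}
    (hS : ∀ g ∈ S, (single g 1 : R[G]) - 1 ∈ I) {g : G} (hg : g ∈ AddSubgroup.closure S) :
    (single g 1 : R[G]) - 1 ∈ I := by
  induction hg using AddSubgroup.closure_induction with
  | mem g hg => exact hS g hg
  | zero => simp [← one_def]
  | add g h _ _ hg hh =>
    have : (single (g + h) 1 : R[G]) - 1 = single g 1 * (single h 1 - 1) + (single g 1 - 1) := by
      rw [mul_sub, single_mul_single, mul_one, mul_one]; abel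
    rw [this]
    exact I.add_mem (I.mul_mem_left _ hh) hg
  | neg g _ hg =>
    have : (single (-g) 1 : R[G]) - 1 = -(single (-g) 1 * (single g 1 - 1)) := by
      rw [mul_sub, single_mul_single, mul_one, mul_one, neg_add_cancel, ← one_def, neg_sub]
    rw [this]
    exact I.neg_mem (I.mul_mem_left _ hg)

theorem span_image_single_sub_one_closure (S : Set G) :
    Ideal.span ((fun g => (single g 1 : R[G]) - 1) '' AddSubgroup.closure S) =
      Ideal.span ((fun g => (single g 1 : R[G]) - 1) '' S) := by
  refine le_antisymm ?_ ?_
  · refine Ideal.span_le.mpr ?_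
    rintro _ ⟨g, hg, rfl⟩
    refine single_sub_one_mem_of_mem_closure (fun s hs => ?_) hg
    exact Ideal.subset_span ⟨s, hs, rfl⟩
  · exact Ideal.span_mono (Set.image_mono AddSubgroup.subset_closure)

theorem sub_mapDomainRingHom_mem_span (e : G →+ G) (he : ∀ g, e (e g) = e g) (a : R[G]) :
    a - mapDomainRingHom R e a ∈ Ideal.span ((fun g => (single g 1 : R[G]) - 1) '' e.ker) := by
  induction a using induction_linear with
  | zero => simp
  | add a b ha hb =>
    rw [map_add, add_sub_add_comm]
    exact Ideal.add_mem _ ha hb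
  | single g c =>
    have hker : -e g + g ∈ e.ker := by
      rw [AddMonoidHom.mem_ker, map_add, map_neg, he, neg_add_cancel]
    have : single g c - single (e g) c = single (e g) c * ((single (-e g + g) 1 : R[G]) - 1) := by
      rw [mul_sub, single_mul_single, mul_one, mul_one, add_neg_cancel_left]
    rw [mapDomainRingHom_apply, mapDomain_single, this]
    exact Ideal.mul_mem_left _ _ (Ideal.subset_span ⟨_, hker, rfl⟩)

theorem ker_mapDomainRingHom_of_idempotent (e : G →+ G) (he : ∀ g, e (e g) = e g) :
    RingHom.ker (mapDomainRingHom R e) =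
      Ideal.span ((fun g => (single g 1 : R[G]) - 1) '' e.ker) := by
  refine le_antisymm (fun a ha => ?_) ?_
  · simpa [RingHom.mem_ker.mp ha] using sub_mapDomainRingHom_mem_span e he a
  · rw [Ideal.span_le]
    rintro _ ⟨g, hg, rfl⟩
    rw [SetLike.mem_coe, RingHom.mem_ker, map_sub, map_one, mapDomainRingHom_apply,
      mapDomain_single, AddMonoidHom.mem_ker.mp hg, ← one_def, sub_self]

theorem ker_eq_ker_mapDomainRingHom_zero {ε : R[G] →+* R} (hε : ∀ g c, ε (single g c) = c) :
    RingHom.ker ε = RingHom.ker (mapDomainRingHom R (0 : G →+ G)) := by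
  have : mapDomainRingHom R (0 : G →+ G) = singleZeroRingHom.comp ε :=
    RingHom.coe_addMonoidHom_injective <| addMonoidHom_ext fun g c => by simp [hε]
  rw [this, RingHom.ker_comp_of_injective _ single_right_injective]

end Group

section Pi

variable {ι : Type*} [Fintype ι] [DecidableEq ι]

theorem ker_indicatorHom_compl (s : Set ι) :
    (Set.indicatorHom ℤ sᶜ).ker = AddSubgroup.closure ((fun i => Pi.single i 1) '' s) := by
  refine le_antisymm (fun g hg => ?_) ?_
  · have hg (i : ι) (hi : i ∉ s) : g i = 0 := by
      simpa [Set.indicatorHom_apply, Set.indicator_of_mem (Set.mem_compl hi)] using congrFun hg i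
    rw [← Finset.univ_sum_single g]
    refine AddSubgroup.sum_mem _ fun i _ => ?_
    by_cases hi : i ∈ s
    · rw [← mul_one (g i), ← smul_eq_mul, Pi.single_smul]
      exact AddSubgroup.zsmul_mem _ (AddSubgroup.subset_closure (Set.mem_image_of_mem _ hi)) _
    · rw [hg i hi, Pi.single_zero]
      exact zero_mem _
  · rw [AddSubgroup.closure_le]
    rintro _ ⟨i, hi, rfl⟩
    rw [SetLike.mem_coe, AddMonoidHom.mem_ker, Set.indicatorHom_apply, Set.indicator_eq_zero',
      Set.disjoint_compl_right_iff_subset]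
    exact Pi.support_single_subset.trans (Set.singleton_subset_iff.mpr hi)

variable {R : Type*} [CommRing R]

theorem ker_mapDomainRingHom_indicatorHom_compl (s : Set ι) :
    RingHom.ker (mapDomainRingHom R (Set.indicatorHom ℤ sᶜ)) =
      Ideal.span ((fun i => (single (Pi.single i 1) 1 : R[ι → ℤ]) - 1) '' s) := by
  have hidem (g : ι → ℤ) : Set.indicatorHom ℤ sᶜ (Set.indicatorHom ℤ sᶜ g) =
      Set.indicatorHom ℤ sᶜ g := by
    simp only [Set.indicatorHom_apply, Set.indicator_indicator, Set.inter_self]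
  rw [ker_mapDomainRingHom_of_idempotent _ hidem, ker_indicatorHom_compl,
    span_image_single_sub_one_closure, Set.image_image]

theorem ker_eq_span_range_single_sub_one {ε : R[ι → ℤ] →+* R} (hε : ∀ g c, ε (single g c) = c) :
    RingHom.ker ε = Ideal.span (Set.range fun i => (single (Pi.single i 1) 1 : R[ι → ℤ]) - 1) := by
  have hzero : Set.indicatorHom ℤ (Set.univᶜ : Set ι) = 0 := AddMonoidHom.ext fun g => by
    rw [Set.compl_univ, Set.indicatorHom_apply, Set.indicator_empty]
    rfl
  rw [ker_eq_ker_mapDomainRingHom_zero hε, ← hzero, ker_mapDomainRingHom_indicatorHom_compl,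
    Set.image_univ]

theorem isSMulRegular_single_sub_one_quotient [IsDomain R] (s : Set ι) {i : ι} (hi : i ∉ s) :
    IsSMulRegular
      (R[ι → ℤ] ⧸ Ideal.span ((fun j => (single (Pi.single j 1) 1 : R[ι → ℤ]) - 1) '' s))
      ((single (Pi.single i 1) 1 : R[ι → ℤ]) - 1) := by
  have hfix : mapDomainRingHom R (Set.indicatorHom ℤ sᶜ) (single (Pi.single i 1) 1 - 1) =
      single (Pi.single i 1) 1 - 1 := by
    rw [map_sub, map_one, mapDomainRingHom_apply, mapDomain_single, Set.indicatorHom_apply,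
      Set.indicator_eq_self.mpr]
    exact Pi.support_single_subset.trans (Set.singleton_subset_iff.mpr hi)
  have hne : (single (Pi.single i 1) 1 : R[ι → ℤ]) - 1 ≠ 0 := by
    rw [sub_ne_zero, one_def, Ne, single_left_inj one_ne_zero, Pi.single_eq_zero_iff]
    exact one_ne_zero
  rw [isSMulRegular_quotient_iff_mem_of_smul_mem, ← ker_mapDomainRingHom_indicatorHom_compl]
  intro a ha
  rw [RingHom.mem_ker, smul_eq_mul, map_mul, hfix] at ha
  exact (mul_eq_zero.mp ha).resolve_left hne

end Pi

end AddMonoidAlgebra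

/-- In the integral group ring `A = ℤ[ℤ^N]` of the free abelian group `ℤ^N`, with
`xᵢ` the group-like elements of the standard basis vectors and `ε` the augmentation
homomorphism summing coefficients, the elements `xᵢ − 1` form a regular sequence
and `ker ε` is the ideal they generate. -/
theorem group_ring_augmentation_ideal_regular (N : ℕ)
    (x : Fin N → AddMonoidAlgebra ℤ (Fin N → ℤ))
    (hx : ∀ i : Fin N, x i = AddMonoidAlgebra.single (Pi.single i 1) 1)
    (ε : AddMonoidAlgebra ℤ (Fin N → ℤ) →+* ℤ)
    (hε : ∀ a : AddMonoidAlgebra ℤ (Fin N → ℤ), ε a = Finsupp.sum a.coeff fun _ n => n) :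
    RingTheory.Sequence.IsRegular (AddMonoidAlgebra ℤ (Fin N → ℤ))
      (List.ofFn fun i : Fin N => x i - 1) ∧
    RingHom.ker ε = Ideal.span (Set.range fun i : Fin N => x i - 1) := by
  have hker := ker_eq_span_range_single_sub_one (ε := ε) fun g c => by
    rw [hε]; exact Finsupp.sum_single_index rfl
  simp only [hx]
  refine ⟨⟨(RingTheory.Sequence.isWeaklyRegular_iff _ _).mpr fun j hj => ?_, ?_⟩, hker⟩
  · rw [smul_eq_mul, Ideal.mul_top, Ideal.ofList_take_ofFn, List.getElem_ofFn]
    exact isSMulRegular_single_sub_one_quotient _ (lt_irrefl j)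
  · rw [smul_eq_mul, Ideal.mul_top, Ideal.ofList_ofFn, ← hker]
    exact (RingHom.ker_ne_top ε).symm
end
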